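/- Bounded distortion for one-dimensional expanding maps: let f be a C^{1+θ}-type map on an interval (or 1-dimensional Riemannian manifold) with σ₁ ≤ f'(z) ≤ σ₂ for constants σ₁ > 1, σ₂, and suppose log f' is θ-Hölder with constant ℓ. If z₁, z₂ are points such that d(f^i(z₁), f^i(z₂)) ≤ c/σ₁^{k−i} for all 0 ≤ i ≤ k, then 1/K ≤ (f^k)'(z₁)/(f^k)'(z₂) ≤ K, where K = exp(ℓ·c^θ/(σ₁^θ − 1)). -/

import Mathlib

/-! Taking logarithms turns the ratio of derivatives of `f^k` into a sum over the orbit of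
`log f'(f^i z₁) - log f'(f^i z₂)`. At time `i` the orbits are `c / σ₁^(k-i)`-close, so by the
Hölder bound the `i`-th term is at most `ℓ c^θ / (σ₁^θ)^(k-i)`, and these bounds form a
geometric series with sum at most `ℓ c^θ / (σ₁^θ - 1)`, independently of `k`. -/

open Finset Real

theorem Real.abs_log_prod_div_prod_le {ι : Type*} (s : Finset ι) {a b : ι → ℝ}
    (ha : ∀ i ∈ s, a i ≠ 0) (hb : ∀ i ∈ s, b i ≠ 0) :
    |log ((∏ i ∈ s, a i) / ∏ i ∈ s, b i)| ≤ ∑ i ∈ s, |log (a i) - log (b i)| := by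
  rw [log_div (prod_ne_zero_iff.2 ha) (prod_ne_zero_iff.2 hb), log_prod ha, log_prod hb,
    ← sum_sub_distrib]
  exact abs_sum_le_sum_abs _ _

theorem Real.inv_exp_le_and_le_exp_of_abs_log_le {x M : ℝ} (hx : 0 < x) (h : |log x| ≤ M) :
    (exp M)⁻¹ ≤ x ∧ x ≤ exp M := by
  obtain ⟨hlow, hup⟩ := abs_le.1 h
  exact ⟨exp_neg M ▸ (le_log_iff_exp_le hx).1 hlow, (log_le_iff_le_exp hx).1 hup⟩

theorem sum_range_inv_pow_sub_le {s : ℝ} (hs : 1 < s) (k : ℕ) :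
    ∑ i ∈ range k, (s ^ (k - i))⁻¹ ≤ (s - 1)⁻¹ := by
  have hs0 : 0 < s := zero_lt_one.trans hs
  calc ∑ i ∈ range k, (s ^ (k - i))⁻¹ = (∑ j ∈ range k, s⁻¹ ^ j) * s⁻¹ := by
        rw [← sum_range_reflect, sum_mul]
        refine sum_congr rfl fun j hj => ?_
        rw [show k - (k - 1 - j) = j + 1 by grind, ← inv_pow, pow_succ]
    _ ≤ (1 - s⁻¹)⁻¹ * s⁻¹ := by
        have hgeom := geom_sum_Ico_le_of_lt_one (m := 0) (n := k) (inv_nonneg.2 hs0.le)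
          (inv_lt_one_of_one_lt₀ hs)
        rw [← range_eq_Ico, pow_zero, one_div] at hgeom
        exact mul_le_mul_of_nonneg_right hgeom (inv_nonneg.2 hs0.le)
    _ = (s - 1)⁻¹ := by
        rw [← mul_inv, sub_mul, one_mul, inv_mul_cancel₀ hs0.ne']

theorem abs_sub_le_of_holder_of_le_div_pow {g : ℝ → ℝ} {ℓ θ c σ : ℝ} (hℓ : 0 ≤ ℓ)
    (hθ : 0 ≤ θ) (hc : 0 ≤ c) (hσ : 1 ≤ σ)
    (hg : ∀ w₁ w₂ : ℝ, |w₁ - w₂| ≤ c → |g w₁ - g w₂| ≤ ℓ * |w₁ - w₂| ^ θ)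
    {n : ℕ} {w₁ w₂ : ℝ} (hw : |w₁ - w₂| ≤ c / σ ^ n) :
    |g w₁ - g w₂| ≤ ℓ * c ^ θ * ((σ ^ θ) ^ n)⁻¹ :=
  calc |g w₁ - g w₂| ≤ ℓ * |w₁ - w₂| ^ θ := hg w₁ w₂ (hw.trans (div_le_self hc (one_le_pow₀ hσ)))
    _ ≤ ℓ * (c / σ ^ n) ^ θ := by gcongr
    _ = ℓ * c ^ θ * ((σ ^ θ) ^ n)⁻¹ := by
        rw [div_rpow hc (by positivity), rpow_pow_comm (by positivity), mul_div_assoc']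
        ring

theorem stmt4_general (f f' : ℝ → ℝ)
    (σ₁ σ₂ ℓ θ c : ℝ) (hσ₁ : 1 < σ₁) (hσ : ∀ z, σ₁ ≤ f' z ∧ f' z ≤ σ₂)
    (hθ : 0 < θ) (hℓ : 0 < ℓ) (hc : 0 < c)
    (hHolder : ∀ w₁ w₂ : ℝ, |w₁ - w₂| ≤ c →
      |Real.log (f' w₁) - Real.log (f' w₂)| ≤ ℓ * |w₁ - w₂| ^ θ)
    (k : ℕ) (z₁ z₂ : ℝ)
    (hclose : ∀ i ≤ k, |f^[i] z₁ - f^[i] z₂| ≤ c / σ₁ ^ (k - i)) :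
    (Real.exp (ℓ * c ^ θ / (σ₁ ^ θ - 1)))⁻¹ ≤
        (∏ i ∈ Finset.range k, f' (f^[i] z₁)) / (∏ i ∈ Finset.range k, f' (f^[i] z₂)) ∧
      (∏ i ∈ Finset.range k, f' (f^[i] z₁)) / (∏ i ∈ Finset.range k, f' (f^[i] z₂)) ≤
        Real.exp (ℓ * c ^ θ / (σ₁ ^ θ - 1)) := by
  have hpos : ∀ z, 0 < f' z := fun z => (zero_lt_one.trans hσ₁).trans_le (hσ z).1
  have hterm : ∀ i ∈ range k, |log (f' (f^[i] z₁)) - log (f' (f^[i] z₂))| ≤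
      ℓ * c ^ θ * ((σ₁ ^ θ) ^ (k - i))⁻¹ := fun i hi =>
    abs_sub_le_of_holder_of_le_div_pow hℓ.le hθ.le hc.le hσ₁.le hHolder
      (hclose i (mem_range.1 hi).le)
  refine inv_exp_le_and_le_exp_of_abs_log_le
    (div_pos (prod_pos fun i _ => hpos _) (prod_pos fun i _ => hpos _)) ?_
  calc _ ≤ ∑ i ∈ range k, |log (f' (f^[i] z₁)) - log (f' (f^[i] z₂))| :=
        abs_log_prod_div_prod_le _ (fun i _ => (hpos _).ne') (fun i _ => (hpos _).ne')
    _ ≤ ∑ i ∈ range k, ℓ * c ^ θ * ((σ₁ ^ θ) ^ (k - i))⁻¹ := sum_le_sum hterm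
    _ ≤ ℓ * c ^ θ * (σ₁ ^ θ - 1)⁻¹ := by
        rw [← mul_sum]
        gcongr
        exact sum_range_inv_pow_sub_le (one_lt_rpow hσ₁ hθ) k

theorem stmt4 (f f' : ℝ → ℝ) (hder : ∀ z, HasDerivAt f (f' z) z)
    (σ₁ σ₂ ℓ θ c : ℝ) (hσ₁ : 1 < σ₁) (hσ : ∀ z, σ₁ ≤ f' z ∧ f' z ≤ σ₂)
    (hθ : 0 < θ) (hθ1 : θ < 1) (hℓ : 0 < ℓ) (hc : 0 < c)
    (hHolder : ∀ w₁ w₂ : ℝ, |w₁ - w₂| ≤ c →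
      |Real.log (f' w₁) - Real.log (f' w₂)| ≤ ℓ * |w₁ - w₂| ^ θ)
    (k : ℕ) (z₁ z₂ : ℝ)
    (hclose : ∀ i ≤ k, |f^[i] z₁ - f^[i] z₂| ≤ c / σ₁ ^ (k - i)) :
    (Real.exp (ℓ * c ^ θ / (σ₁ ^ θ - 1)))⁻¹ ≤
        (∏ i ∈ Finset.range k, f' (f^[i] z₁)) / (∏ i ∈ Finset.range k, f' (f^[i] z₂)) ∧
      (∏ i ∈ Finset.range k, f' (f^[i] z₁)) / (∏ i ∈ Finset.range k, f' (f^[i] z₂)) ≤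
        Real.exp (ℓ * c ^ θ / (σ₁ ^ θ - 1)) :=
  stmt4_general f f' σ₁ σ₂ ℓ θ c hσ₁ hσ hθ hℓ hc hHolder k z₁ z₂ hclose
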